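/- arXiv:2012.10142 — 4 statements merged into one kernel-verified Lean document; each statement's English description precedes it below -/
import Mathlib

section
/- Let M > 0, ε > 0, and suppose x : [0, T] → ℝ is a càdlàg function with x(0) = 0 and |x(t) − x(s)| ≤ M|t − s| + ε for all s, t ∈ [0, T]. Then there exists a function y : [0, T] → ℝ with y(0) = 0 and |y(t) − y(s)| ≤ M|t − s| for all s, t ∈ [0, T], such that sup_{t∈[0,T]} |x(t) − y(t)| ≤ 4ε. -/
/-- A function on `[0,T]` with values in a topological space is càdlàg if it is
right-continuous and has left limits. -/
def Cadlag {E : Type*} [TopologicalSpace E] {T : ℝ} (f : Set.Icc (0 : ℝ) T → E) : Prop :=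
  (∀ t : Set.Icc (0 : ℝ) T, ContinuousWithinAt f (Set.Ici t) t) ∧
  (∀ t : Set.Icc (0 : ℝ) T, 0 < t.1 → ∃ l : E, Filter.Tendsto f (nhdsWithin t (Set.Iio t)) (nhds l))

/-- Any càdlàg function on `[0,T]` that vanishes at `0` and is `M`-Lipschitz up to an
additive error `ε` lies within uniform distance `4ε` of a genuine `M`-Lipschitz function
vanishing at `0`. -/
theorem stmt4 (T : ℝ) (hT : 0 ≤ T) (M ε : ℝ) (hM : 0 < M) (hε : 0 < ε)
    (x : Set.Icc (0 : ℝ) T → ℝ) (hx : Cadlag x)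
    (hx0 : x ⟨0, Set.left_mem_Icc.mpr hT⟩ = 0)
    (hxLip : ∀ s t : Set.Icc (0 : ℝ) T, |x t - x s| ≤ M * |(t : ℝ) - (s : ℝ)| + ε) :
    ∃ y : Set.Icc (0 : ℝ) T → ℝ,
      y ⟨0, Set.left_mem_Icc.mpr hT⟩ = 0 ∧
      (∀ s t : Set.Icc (0 : ℝ) T, |y t - y s| ≤ M * |(t : ℝ) - (s : ℝ)|) ∧
      ∀ t : Set.Icc (0 : ℝ) T, |x t - y t| ≤ 4 * ε := by
  set z : Set.Icc (0:ℝ) T := ⟨0, Set.left_mem_Icc.mpr hT⟩ with hz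
  haveI : Nonempty (Set.Icc (0:ℝ) T) := ⟨z⟩
  set g : Set.Icc (0:ℝ) T → ℝ :=
    fun t => ⨅ s : Set.Icc (0:ℝ) T, (x s + M * |(t:ℝ) - (s:ℝ)|) with hg
  have hbdd : ∀ t : Set.Icc (0:ℝ) T,
      BddBelow (Set.range fun s : Set.Icc (0:ℝ) T => x s + M * |(t:ℝ) - (s:ℝ)|) := by
    intro t
    refine ⟨x t - ε, ?_⟩
    rintro _ ⟨s, rfl⟩
    dsimp only
    have h := (le_abs_self (x t - x s)).trans (hxLip s t)
    linarith
  have key1 : ∀ t, g t ≤ x t := by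
    intro t
    have := ciInf_le (hbdd t) t
    simpa using this
  have key2 : ∀ t, x t - ε ≤ g t := by
    intro t
    refine le_ciInf fun s => ?_
    show x t - ε ≤ x s + M * |(t:ℝ) - (s:ℝ)|
    have h := (le_abs_self (x t - x s)).trans (hxLip s t)
    linarith
  have hLipg : ∀ s t : Set.Icc (0:ℝ) T, g t - g s ≤ M * |(t:ℝ) - (s:ℝ)| := by
    intro s t
    have h : g t - M * |(t:ℝ) - (s:ℝ)| ≤ g s := by
      refine le_ciInf fun u => ?_
      have h1 : g t ≤ x u + M * |(t:ℝ) - (u:ℝ)| := ciInf_le (hbdd t) u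
      have h2 : |(t:ℝ) - (u:ℝ)| ≤ |(t:ℝ) - (s:ℝ)| + |(s:ℝ) - (u:ℝ)| := abs_sub_le _ _ _
      nlinarith [hM.le]
    linarith
  refine ⟨fun t => g t - g z, by simp, ?_, ?_⟩
  · intro s t
    dsimp only
    rw [abs_le]
    constructor
    · have := hLipg t s
      rw [abs_sub_comm] at this
      linarith
    · have := hLipg s t
      linarith
  · intro t
    have h1 := key1 t
    have h2 := key2 t
    have h3 := key1 z
    have h4 := key2 z
    rw [hx0] at h3 h4
    dsimp only
    rw [abs_le]
    constructor <;> linarith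
end

section
/- Let 𝒩 be a unit-rate Poisson process and T > 0. Then with probability one, for every γ ∈ [0, 1/2), sup_{t ∈ [0, T]} n^γ |𝒩(n t)/n − t| → 0 as n → ∞. -/
/-!
Fix the grid step `T`. The Chernoff bound for the Poisson law with parameter `u = c j^(β-1)`
gives `P(|𝒩(jT) - jT| ≥ j^β) ≤ 2 exp(-c j^(2β-1) / 2)`, which is summable when `β > 1/2`; by
Borel–Cantelli, almost surely `|𝒩(jT) - jT| = o(j^β)` for every `β > 1/2`. Since the paths are
monotone, `|𝒩(s) - s|` between two consecutive grid points exceeds its values at the grid points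
by at most `T`, so `sup_{s ≤ nT} |𝒩(s) - s| = o(n^(1-γ))`, while
`n^γ |𝒩(nt)/n - t| = |𝒩(nt) - nt| / n^(1-γ)`.
-/

open MeasureTheory ProbabilityTheory

/-- `N` is a unit-rate Poisson (counting) process on `[0,∞)`: it starts at `0`, has
nondecreasing paths, measurable marginals, Poisson-distributed increments and
independent increments. -/
def IsUnitPoissonProcess {Ω : Type*} [MeasurableSpace Ω] (P : Measure Ω)
    (N : ℝ → Ω → ℕ) : Prop :=
  (∀ ω, N 0 ω = 0) ∧
  (∀ ω, Monotone fun t => N t ω) ∧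
  (∀ t, Measurable (N t)) ∧
  (∀ s t : ℝ, 0 ≤ s → s ≤ t →
    Measure.map (fun ω => N t ω - N s ω) P = poissonMeasure (Real.toNNReal (t - s))) ∧
  (∀ (n : ℕ) (tt : Fin (n + 1) → ℝ), Monotone tt → (∀ i, 0 ≤ tt i) →
    iIndepFun
      (fun (i : Fin n) ω => N (tt i.succ) ω - N (tt i.castSucc) ω) P)

open Filter Real Asymptotics
open scoped NNReal Nat Topology

lemma hasSum_poissonMeasure_mul_exp (r : ℝ≥0) (u : ℝ) :
    HasSum (fun n : ℕ => exp (-r) * r ^ n / n ! * exp (u * n)) (exp (r * (exp u - 1))) := by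
  have h := (NormedSpace.expSeries_div_hasSum_exp ((r : ℝ) * exp u)).mul_left (exp (-r))
  rw [← Real.exp_eq_exp_ℝ, ← Real.exp_add, neg_add_eq_sub, ← mul_sub_one] at h
  refine h.congr_fun fun n => ?_
  rw [mul_pow, ← Real.exp_nat_mul, mul_comm (n : ℝ) u]
  ring

lemma integrable_exp_mul_poissonMeasure (r : ℝ≥0) (u : ℝ) :
    Integrable (fun n : ℕ => exp (u * n)) (poissonMeasure r) := by
  rw [integrable_poissonMeasure_iff]
  simpa only [Real.norm_eq_abs, abs_of_pos (exp_pos _), mul_assoc] using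
    (hasSum_poissonMeasure_mul_exp r u).summable

lemma mgf_poissonMeasure (r : ℝ≥0) (u : ℝ) :
    mgf (fun n : ℕ => (n : ℝ)) (poissonMeasure r) u = exp (r * (exp u - 1)) := by
  rw [mgf, integral_poissonMeasure]
  exact (hasSum_poissonMeasure_mul_exp r u).tsum_eq

lemma poissonMeasure_real_le_abs_sub_le_exp (r : ℝ≥0) (x : ℝ) {u : ℝ} (hu0 : 0 ≤ u)
    (hu1 : u ≤ 1) :
    (poissonMeasure r).real {n | x ≤ |(n : ℝ) - r|} ≤ 2 * exp (r * u ^ 2 - u * x) := by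
  have hupper : (poissonMeasure r).real {n | r + x ≤ (n : ℝ)} ≤ exp (r * u ^ 2 - u * x) := by
    refine (measure_ge_le_exp_mul_mgf _ hu0 (integrable_exp_mul_poissonMeasure r u)).trans ?_
    rw [mgf_poissonMeasure, ← exp_add, exp_le_exp]
    have := (abs_le.1 (abs_exp_sub_one_sub_id_le (abs_le.2 ⟨by linarith, hu1⟩))).2
    nlinarith [r.coe_nonneg]
  have hlower : (poissonMeasure r).real {n | (n : ℝ) ≤ r - x} ≤ exp (r * u ^ 2 - u * x) := by
    refine (measure_le_le_exp_mul_mgf _ (neg_nonpos.2 hu0)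
      (integrable_exp_mul_poissonMeasure r (-u))).trans ?_
    rw [mgf_poissonMeasure, ← exp_add, exp_le_exp]
    have := (abs_le.1 (abs_exp_sub_one_sub_id_le (x := -u)
      (abs_le.2 ⟨by linarith, by linarith⟩))).2
    nlinarith [r.coe_nonneg]
  have hsub :
      {n : ℕ | x ≤ |(n : ℝ) - r|} ⊆ {n | r + x ≤ (n : ℝ)} ∪ {n | (n : ℝ) ≤ r - x} := by
    intro n hn
    rcases le_abs'.1 (show x ≤ |(n : ℝ) - r| from hn) with h | h
    · exact Or.inr (show (n : ℝ) ≤ r - x by linarith)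
    · exact Or.inl (show r + x ≤ (n : ℝ) by linarith)
  calc _ ≤ _ := measureReal_mono hsub
    _ ≤ _ := measureReal_union_le _ _
    _ ≤ _ := by linarith

lemma ae_eventually_notMem_of_le_ofReal {α : Type*} [MeasurableSpace α] {μ : Measure α}
    {s : ℕ → Set α} {f : ℕ → ℝ} (hf0 : 0 ≤ f) (hf : Summable f)
    (hs : ∀ i, μ (s i) ≤ ENNReal.ofReal (f i)) : ∀ᵐ x ∂μ, ∀ᶠ i in atTop, x ∉ s i := by
  refine ae_eventually_notMem
    (ne_top_of_le_ne_top (ENNReal.ofReal_ne_top (r := ∑' i, f i)) ?_)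
  rw [ENNReal.ofReal_tsum_of_nonneg hf0 hf]
  exact ENNReal.tsum_le_tsum hs

lemma summable_exp_neg_mul_rpow {K δ : ℝ} (hK : 0 < K) (hδ : 0 < δ) :
    Summable fun j : ℕ => exp (-(K * (j : ℝ) ^ δ)) := by
  refine summable_of_isBigO_nat (Real.summable_nat_rpow.2 (by norm_num : (-2 : ℝ) < -1)) ?_
  have h := ((isLittleO_exp_neg_mul_rpow_atTop hK (-2 / δ)).comp_tendsto
    ((tendsto_rpow_atTop hδ).comp tendsto_natCast_atTop_atTop)).isBigO
  refine h.congr (fun j => by simp [neg_mul]) (fun j => ?_)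
  simp only [Function.comp_apply]
  rw [← rpow_mul j.cast_nonneg, mul_div_cancel₀ _ hδ.ne']

lemma isLittleO_natCast_rpow_rpow {q β : ℝ} (h : q < β) :
    (fun j : ℕ => (j : ℝ) ^ q) =o[atTop] (fun j : ℕ => (j : ℝ) ^ β) := by
  have hsmall : (fun x : ℝ => x ^ (q - β)) =o[atTop] (fun _ => (1 : ℝ)) :=
    (isLittleO_one_iff ℝ).2 <| by
      simpa only [neg_sub] using tendsto_rpow_neg_atTop (sub_pos.2 h)
  have hreal := (hsmall.mul_isBigO (isBigO_refl (fun x : ℝ => x ^ β) atTop)).congr'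
    (by filter_upwards [eventually_gt_atTop 0] with x hx; rw [← rpow_add hx, sub_add_cancel])
    (Eventually.of_forall fun x => one_mul _)
  exact hreal.comp_tendsto tendsto_natCast_atTop_atTop

lemma Asymptotics.IsLittleO.partialSups {b g : ℕ → ℝ} (hb : 0 ≤ b) (hg : Monotone g)
    (hg_top : Tendsto g atTop atTop) (h : b =o[atTop] g) :
    (fun n => _root_.partialSups b n) =o[atTop] g := by
  refine isLittleO_iff.2 fun c hc => ?_
  obtain ⟨J, hJ⟩ :=
    eventually_atTop.1 ((isLittleO_iff.1 h hc).and (hg_top.eventually_ge_atTop 0))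
  filter_upwards [hg_top.eventually_ge_atTop (_root_.partialSups b J / c),
    eventually_ge_atTop J] with n hn hJn
  have hgn : 0 ≤ g n := (hJ J le_rfl).2.trans (hg hJn)
  rw [Real.norm_of_nonneg ((hb 0).trans (le_partialSups_of_le b (Nat.zero_le n))),
    Real.norm_of_nonneg hgn]
  refine partialSups_le b n _ fun j hjn => ?_
  rcases le_total j J with hjJ | hJj
  · calc b j ≤ _root_.partialSups b J := le_partialSups_of_le b hjJ
      _ ≤ c * g n := (div_le_iff₀' hc).1 hn
  · obtain ⟨hbj, hgj⟩ := hJ j hJj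
    rw [Real.norm_of_nonneg (hb j), Real.norm_of_nonneg hgj] at hbj
    exact hbj.trans (mul_le_mul_of_nonneg_left (hg hjn) hc.le)

lemma abs_sub_le_max_add_of_monotone {f : ℝ → ℝ} (hf : Monotone f) {a b s : ℝ}
    (has : a ≤ s) (hsb : s ≤ b) : |f s - s| ≤ max |f a - a| |f b - b| + (b - a) := by
  have ha := hf has
  have hb := hf hsb
  rw [abs_le]
  constructor
  · have := neg_abs_le (f a - a); have := le_max_left |f a - a| |f b - b|; linarith
  · have := le_abs_self (f b - b); have := le_max_right |f a - a| |f b - b|; linarith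

lemma abs_sub_le_partialSups_add {f : ℝ → ℝ} (hf : Monotone f) {T : ℝ} (hT : 0 < T) (n : ℕ)
    {s : ℝ} (hs0 : 0 ≤ s) (hsn : s ≤ n * T) :
    |f s - s| ≤ partialSups (fun j : ℕ => |f (j * T) - j * T|) n + T := by
  have hsT : 0 ≤ s / T := div_nonneg hs0 hT.le
  have hlo : ⌊s / T⌋₊ * T ≤ s := (le_div_iff₀ hT).1 (Nat.floor_le hsT)
  have hhi : s ≤ ⌈s / T⌉₊ * T := (div_le_iff₀ hT).1 (Nat.le_ceil _)
  have hceil_le : ⌈s / T⌉₊ ≤ n := Nat.ceil_le.2 ((div_le_iff₀ hT).2 hsn)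
  have hgap : (⌈s / T⌉₊ : ℝ) ≤ ⌊s / T⌋₊ + 1 := by exact_mod_cast Nat.ceil_le_floor_add_one _
  refine (abs_sub_le_max_add_of_monotone hf hlo hhi).trans (add_le_add ?_ ?_)
  · exact max_le (le_partialSups_of_le (fun j : ℕ => |f (j * T) - j * T|)
        ((Nat.floor_le_ceil _).trans hceil_le))
      (le_partialSups_of_le (fun j : ℕ => |f (j * T) - j * T|) hceil_le)
  · have := mul_le_mul_of_nonneg_right hgap hT.le
    linarith

lemma rpow_mul_abs_div_sub_eq {n : ℝ} (hn : 0 < n) (γ y t : ℝ) :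
    n ^ γ * |y / n - t| = |y - n * t| / n ^ (1 - γ) := by
  have h : y / n - t = (y - n * t) / n := by field_simp
  rw [h, abs_div, abs_of_pos hn, rpow_sub hn, rpow_one]
  field_simp

lemma tendsto_iSup_rpow_mul_abs_div_sub {f : ℝ → ℝ} (hf : Monotone f) {T : ℝ} (hT : 0 < T)
    {γ : ℝ} (hγ : γ < 1)
    (h : (fun j : ℕ => |f (j * T) - j * T|) =o[atTop] (fun j : ℕ => (j : ℝ) ^ (1 - γ))) :
    Tendsto (fun n : ℕ => ⨆ t : Set.Icc (0 : ℝ) T, (n : ℝ) ^ γ * |f (n * t) / n - t|)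
      atTop (𝓝 0) := by
  set M := partialSups (fun j : ℕ => |f (j * T) - j * T|)
  have hβ : 0 < 1 - γ := sub_pos.2 hγ
  have hpow_top : Tendsto (fun n : ℕ => (n : ℝ) ^ (1 - γ)) atTop atTop :=
    (tendsto_rpow_atTop hβ).comp tendsto_natCast_atTop_atTop
  have hM : (fun n => M n) =o[atTop] (fun n : ℕ => (n : ℝ) ^ (1 - γ)) :=
    h.partialSups (fun _ => abs_nonneg _)
      (fun _ _ hij => rpow_le_rpow (Nat.cast_nonneg _) (Nat.cast_le.2 hij) hβ.le) hpow_top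
  have hM0 : ∀ n, 0 ≤ M n := fun n => (abs_nonneg _).trans
    (le_partialSups_of_le (fun j : ℕ => |f (j * T) - j * T|) (Nat.zero_le n))
  have hbound : Tendsto (fun n : ℕ => (M n + T) / (n : ℝ) ^ (1 - γ)) atTop (𝓝 0) := by
    simpa only [add_div, add_zero] using
      hM.tendsto_div_nhds_zero.add (tendsto_const_nhds.div_atTop hpow_top)
  refine squeeze_zero' (Eventually.of_forall fun n => Real.iSup_nonneg fun t => by positivity)
    ?_ hbound
  filter_upwards [eventually_gt_atTop 0] with n hn
  have hn' : (0 : ℝ) < n := Nat.cast_pos.2 hn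
  refine Real.iSup_le (fun t => ?_) (by have := hM0 n; positivity)
  rw [rpow_mul_abs_div_sub_eq hn']
  gcongr
  exact abs_sub_le_partialSups_add hf hT n (mul_nonneg hn'.le t.2.1)
    (mul_le_mul_of_nonneg_left t.2.2 hn'.le)

namespace IsUnitPoissonProcess

variable {Ω : Type*} [MeasurableSpace Ω] {P : Measure Ω} {N : ℝ → Ω → ℕ}

lemma map_eq_poissonMeasure (hN : IsUnitPoissonProcess P N) {t : ℝ} (ht : 0 ≤ t) :
    P.map (N t) = poissonMeasure t.toNNReal := by
  simpa only [hN.1, Nat.sub_zero, sub_zero] using hN.2.2.2.1 0 t le_rfl ht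

lemma measure_le_abs_sub_le_exp (hN : IsUnitPoissonProcess P N) {t : ℝ} (ht : 0 ≤ t) (x : ℝ)
    {u : ℝ} (hu0 : 0 ≤ u) (hu1 : u ≤ 1) :
    P {ω | x ≤ |(N t ω : ℝ) - t|} ≤ ENNReal.ofReal (2 * exp (t * u ^ 2 - u * x)) := by
  have h := poissonMeasure_real_le_abs_sub_le_exp t.toNNReal x hu0 hu1
  rw [Real.coe_toNNReal _ ht] at h
  change P (N t ⁻¹' {n | x ≤ |(n : ℝ) - t|}) ≤ _
  rw [← Measure.map_apply (hN.2.2.1 t) .of_discrete, hN.map_eq_poissonMeasure ht,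
    ← ofReal_measureReal]
  exact ENNReal.ofReal_le_ofReal h

lemma ae_eventually_abs_sub_lt_rpow (hN : IsUnitPoissonProcess P N) {T : ℝ} (hT : 0 ≤ T)
    {β : ℝ} (hβ : 1 / 2 < β) (hβ1 : β < 1) :
    ∀ᵐ ω ∂P, ∀ᶠ j : ℕ in atTop, |(N (j * T) ω : ℝ) - j * T| < (j : ℝ) ^ β := by
  set c : ℝ := 1 / (2 * T + 2)
  have hc : 0 < c := by positivity
  have hc1 : c ≤ 1 := div_le_one_of_le₀ (by linarith) (by positivity)
  have hcT : c * T ≤ 1 / 2 := by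
    rw [div_mul_eq_mul_div, one_mul, div_le_iff₀ (by positivity)]; linarith
  have hbound : ∀ j : ℕ, P {ω | (j : ℝ) ^ β ≤ |(N (j * T) ω : ℝ) - j * T|} ≤
      ENNReal.ofReal (2 * exp (-(c / 2 * (j : ℝ) ^ (2 * β - 1)))) := by
    intro j
    have hj := j.cast_nonneg (α := ℝ)
    have hu1 : c * (j : ℝ) ^ (β - 1) ≤ 1 := by
      rcases j.eq_zero_or_pos with rfl | hj1
      · simp [zero_rpow (by linarith : β - 1 ≠ 0)]
      · exact mul_le_one₀ hc1 (by positivity)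
          (rpow_le_one_of_one_le_of_nonpos (Nat.one_le_cast.2 hj1) (by linarith))
    refine (hN.measure_le_abs_sub_le_exp (by positivity) _ (by positivity) hu1).trans
      (ENNReal.ofReal_le_ofReal (mul_le_mul_of_nonneg_left (exp_le_exp.2 ?_) zero_le_two))
    have hjβ : (j : ℝ) * (j : ℝ) ^ (β - 1) = (j : ℝ) ^ β := by
      rw [← rpow_one_add' hj (by linarith), add_sub_cancel]
    have hj2β : (j : ℝ) ^ β * (j : ℝ) ^ (β - 1) = (j : ℝ) ^ (2 * β - 1) := by
      rw [← rpow_add' hj (by linarith)]; ring_nf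
    have hexp :
        (j : ℝ) * T * (c * (j : ℝ) ^ (β - 1)) ^ 2 - c * (j : ℝ) ^ (β - 1) * (j : ℝ) ^ β =
          c * (j : ℝ) ^ (2 * β - 1) * (c * T - 1) := by
      rw [← hj2β, ← hjβ]; ring
    rw [hexp]
    nlinarith [mul_nonneg hc.le (rpow_nonneg hj (2 * β - 1))]
  have hsum : Summable fun j : ℕ => 2 * exp (-(c / 2 * (j : ℝ) ^ (2 * β - 1))) :=
    (summable_exp_neg_mul_rpow (by positivity) (by linarith)).mul_left 2
  filter_upwards [ae_eventually_notMem_of_le_ofReal (fun j => by positivity) hsum hbound]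
    with ω hω
  exact hω.mono fun j hj => not_le.1 hj

lemma ae_isLittleO_rpow (hN : IsUnitPoissonProcess P N) {T : ℝ} (hT : 0 ≤ T) :
    ∀ᵐ ω ∂P, ∀ β : ℝ, 1 / 2 < β →
      (fun j : ℕ => |(N (j * T) ω : ℝ) - j * T|) =o[atTop] (fun j : ℕ => (j : ℝ) ^ β) := by
  have h : ∀ᵐ ω ∂P, ∀ q : ℚ, 1 / 2 < (q : ℝ) → (q : ℝ) < 1 →
      ∀ᶠ j : ℕ in atTop, |(N (j * T) ω : ℝ) - j * T| < (j : ℝ) ^ (q : ℝ) := by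
    refine ae_all_iff.2 fun q => ?_
    by_cases hq : 1 / 2 < (q : ℝ) ∧ (q : ℝ) < 1
    · exact (hN.ae_eventually_abs_sub_lt_rpow hT hq.1 hq.2).mono fun ω hω _ _ => hω
    · exact Eventually.of_forall fun ω h1 h2 => absurd ⟨h1, h2⟩ hq
  filter_upwards [h] with ω hω β hβ
  obtain ⟨q, hq_gt, hq_lt⟩ := exists_rat_btwn (lt_min hβ (by norm_num : (1 / 2 : ℝ) < 1))
  have hO : (fun j : ℕ => |(N (j * T) ω : ℝ) - j * T|) =O[atTop]
      (fun j : ℕ => (j : ℝ) ^ (q : ℝ)) :=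
    IsBigO.of_bound 1 <| (hω q hq_gt (hq_lt.trans_le (min_le_right _ _))).mono fun j hj => by
      rw [one_mul, Real.norm_of_nonneg (abs_nonneg _), Real.norm_of_nonneg (by positivity)]
      exact hj.le
  exact hO.trans_isLittleO (isLittleO_natCast_rpow_rpow (hq_lt.trans_le (min_le_left _ _)))

end IsUnitPoissonProcess

theorem stmt5_general {Ω : Type*} [MeasurableSpace Ω] (P : Measure Ω)
    (N : ℝ → Ω → ℕ) (hN : IsUnitPoissonProcess P N) (T : ℝ) (hT : 0 < T) :
    ∀ᵐ ω ∂P, ∀ γ ∈ Set.Ico (0 : ℝ) (1 / 2),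
      Filter.Tendsto
        (fun n : ℕ => ⨆ t : Set.Icc (0 : ℝ) T,
          (n : ℝ) ^ γ * |(N ((n : ℝ) * t) ω : ℝ) / (n : ℝ) - (t : ℝ)|)
        Filter.atTop (nhds 0) := by
  filter_upwards [hN.ae_isLittleO_rpow hT.le] with ω hω γ hγ
  have hmono : Monotone fun s => (N s ω : ℝ) := fun _ _ h => Nat.cast_le.2 (hN.2.1 ω h)
  exact tendsto_iSup_rpow_mul_abs_div_sub hmono hT (by linarith [hγ.2])
    (hω (1 - γ) (by linarith [hγ.2]))

/-- Refined functional strong law of large numbers for the Poisson process: almost surely,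
for every `γ ∈ [0, 1/2)`, `sup_{t ∈ [0,T]} n^γ |𝒩(nt)/n − t| → 0`. -/
theorem stmt5 {Ω : Type*} [MeasurableSpace Ω] (P : Measure Ω) [IsProbabilityMeasure P]
    (N : ℝ → Ω → ℕ) (hN : IsUnitPoissonProcess P N) (T : ℝ) (hT : 0 < T) :
    ∀ᵐ ω ∂P, ∀ γ ∈ Set.Ico (0 : ℝ) (1 / 2),
      Filter.Tendsto
        (fun n : ℕ => ⨆ t : Set.Icc (0 : ℝ) T,
          (n : ℝ) ^ γ * |(N ((n : ℝ) * t) ω : ℝ) / (n : ℝ) - (t : ℝ)|)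
        Filter.atTop (nhds 0) :=
  stmt5_general P N hN T hT
end

section
/- Let B ∈ ℕ with B ≥ 1, μ > 0, and suppose q : [t₀, t₁] → [0,1]^ℕ has differentiable coordinates satisfying q̇(t, i) = −μ i [q(t, i) − q(t, i+1)] for all j < i ≤ B, with q(t, i) = 0 for all i > B, and q(t, i+1) ≤ q(t, i) for all i. Define v(t) = Σ_{i=j+1}^{B} q(t, i). Then v is differentiable on (t₀, t₁) with v̇(t) = −μ v(t) − μ j q(t, j+1), and hence v(t) ≤ v(t₀) e^{−μ(t − t₀)} for all t ∈ [t₀, t₁]. -/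
/-!
Since `q̇(i) = −μ i (q(i) − q(i+1))`, summation by parts turns `Σ_{i>j} i (q(i) − q(i+1))` into
`v + j q(j+1)` once `q(B+1) = 0`, which gives the ODE for `v`. As `μ j q(j+1) ≥ 0`, this yields
`v̇ ≤ −μ v`, and Grönwall's inequality gives the exponential decay.
-/

open Finset

lemma sum_Icc_natCast_mul_sub_succ (f : ℕ → ℝ) {j B : ℕ} (hjB : j ≤ B) :
    ∑ i ∈ Icc (j + 1) B, (i : ℝ) * (f i - f (i + 1)) =
      ∑ i ∈ Icc (j + 1) B, f i + j * f (j + 1) - B * f (B + 1) := by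
  induction B, hjB using Nat.le_induction with
  | base => simp
  | succ n hn ih =>
    rw [sum_Icc_succ_top (by omega), sum_Icc_succ_top (by omega), ih]
    push_cast
    ring

lemma sum_Icc_natCast_mul_sub_succ_of_eq_zero {f : ℕ → ℝ} {B : ℕ} (hf : ∀ i, B < i → f i = 0)
    (j : ℕ) :
    ∑ i ∈ Icc (j + 1) B, (i : ℝ) * (f i - f (i + 1)) = ∑ i ∈ Icc (j + 1) B, f i + j * f (j + 1) := by
  rcases le_or_gt j B with hjB | hBj
  · rw [sum_Icc_natCast_mul_sub_succ f hjB, hf (B + 1) B.lt_succ_self]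
    ring
  · simp [Icc_eq_empty_of_lt (Nat.lt_succ_of_lt hBj), hf (j + 1) (by omega)]

lemma hasDerivWithinAt_sum_Icc_of_departures {q : ℝ → ℕ → ℝ} {μ : ℝ} {j B : ℕ} {s : Set ℝ}
    {t : ℝ} (hzero : ∀ i, B < i → q t i = 0)
    (hderiv : ∀ i ∈ Icc (j + 1) B,
      HasDerivWithinAt (fun s => q s i) (-μ * i * (q t i - q t (i + 1))) s t) :
    HasDerivWithinAt (fun s => ∑ i ∈ Icc (j + 1) B, q s i)
      (-μ * ∑ i ∈ Icc (j + 1) B, q t i - μ * j * q t (j + 1)) s t := by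
  have hsum : ∑ i ∈ Icc (j + 1) B, -μ * i * (q t i - q t (i + 1)) =
      -μ * ∑ i ∈ Icc (j + 1) B, q t i - μ * j * q t (j + 1) := by
    simp_rw [mul_assoc (-μ), ← mul_sum, sum_Icc_natCast_mul_sub_succ_of_eq_zero hzero]
    ring
  exact hsum ▸ HasDerivWithinAt.fun_sum hderiv

lemma le_mul_exp_of_hasDerivWithinAt_le_mul {f f' : ℝ → ℝ} {K a b : ℝ}
    (hf : ContinuousOn f (Set.Icc a b))
    (hf' : ∀ x ∈ Set.Ico a b, HasDerivWithinAt f (f' x) (Set.Ici x) x)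
    (bound : ∀ x ∈ Set.Ico a b, f' x ≤ K * f x) :
    ∀ x ∈ Set.Icc a b, f x ≤ f a * Real.exp (K * (x - a)) := by
  intro x hx
  have := le_gronwallBound_of_liminf_deriv_right_le hf
    (fun x hx _ hr => (hf' x hx).liminf_right_slope_le hr) le_rfl
    (fun x hx => (bound x hx).trans_eq (add_zero _).symm) x hx
  rwa [gronwallBound_ε0] at this

theorem stmt11_general (B j : ℕ) (μ : ℝ) (hμ : 0 < μ)
    (t₀ t₁ : ℝ) (q : ℝ → ℕ → ℝ)
    (hrange : ∀ t ∈ Set.Icc t₀ t₁, ∀ i, q t i ∈ Set.Icc (0 : ℝ) 1)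
    (hzero : ∀ t ∈ Set.Icc t₀ t₁, ∀ i, B < i → q t i = 0)
    (hderiv : ∀ i, j < i → i ≤ B → ∀ t ∈ Set.Icc t₀ t₁,
      HasDerivWithinAt (fun s => q s i)
        (-μ * i * (q t i - q t (i + 1))) (Set.Icc t₀ t₁) t) :
    (∀ t ∈ Set.Ioo t₀ t₁,
      HasDerivAt (fun s => ∑ i ∈ Finset.Icc (j + 1) B, q s i)
        (-μ * (∑ i ∈ Finset.Icc (j + 1) B, q t i) - μ * j * q t (j + 1)) t) ∧
    (∀ t ∈ Set.Icc t₀ t₁,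
      (∑ i ∈ Finset.Icc (j + 1) B, q t i) ≤
        (∑ i ∈ Finset.Icc (j + 1) B, q t₀ i) * Real.exp (-μ * (t - t₀))) := by
  have hv : ∀ t ∈ Set.Icc t₀ t₁,
      HasDerivWithinAt (fun s => ∑ i ∈ Icc (j + 1) B, q s i)
        (-μ * ∑ i ∈ Icc (j + 1) B, q t i - μ * j * q t (j + 1)) (Set.Icc t₀ t₁) t :=
    fun t ht => hasDerivWithinAt_sum_Icc_of_departures (hzero t ht) fun i hi =>
      hderiv i (mem_Icc.mp hi).1 (mem_Icc.mp hi).2 t ht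
  refine ⟨fun t ht => (hv t (Set.Ioo_subset_Icc_self ht)).hasDerivAt (Icc_mem_nhds ht.1 ht.2), ?_⟩
  refine le_mul_exp_of_hasDerivWithinAt_le_mul (fun t ht => (hv t ht).continuousWithinAt)
    (fun t ht => (hv t (Set.Ico_subset_Icc_self ht)).mono_of_mem_nhdsWithin
      (Icc_mem_nhdsGE_of_mem ht)) fun t ht => ?_
  have hq : 0 ≤ q t (j + 1) := (hrange t (Set.Ico_subset_Icc_self ht) (j + 1)).1
  have : 0 ≤ μ * j * q t (j + 1) := by positivity
  linarith

/-- Exponential decay of the tail mass: if the coordinates `q(·, i)`, `j < i ≤ B`, evolve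
purely by departures (`q̇(t,i) = −μ i [q(t,i) − q(t,i+1)]`), with `q(·,i) = 0` for `i > B`,
then `v(t) = Σ_{i=j+1}^B q(t,i)` satisfies `v̇ = −μ v − μ j q(·, j+1)` and hence
`v(t) ≤ v(t₀) e^{−μ(t−t₀)}`. -/
theorem stmt11 (B j : ℕ) (hB : 1 ≤ B) (hj : 1 ≤ j) (μ : ℝ) (hμ : 0 < μ)
    (t₀ t₁ : ℝ) (ht : t₀ < t₁) (q : ℝ → ℕ → ℝ)
    (hrange : ∀ t ∈ Set.Icc t₀ t₁, ∀ i, q t i ∈ Set.Icc (0 : ℝ) 1)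
    (hmono : ∀ t ∈ Set.Icc t₀ t₁, ∀ i, q t (i + 1) ≤ q t i)
    (hzero : ∀ t ∈ Set.Icc t₀ t₁, ∀ i, B < i → q t i = 0)
    (hderiv : ∀ i, j < i → i ≤ B → ∀ t ∈ Set.Icc t₀ t₁,
      HasDerivWithinAt (fun s => q s i)
        (-μ * i * (q t i - q t (i + 1))) (Set.Icc t₀ t₁) t) :
    (∀ t ∈ Set.Ioo t₀ t₁,
      HasDerivAt (fun s => ∑ i ∈ Finset.Icc (j + 1) B, q s i)
        (-μ * (∑ i ∈ Finset.Icc (j + 1) B, q t i) - μ * j * q t (j + 1)) t) ∧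
    (∀ t ∈ Set.Icc t₀ t₁,
      (∑ i ∈ Finset.Icc (j + 1) B, q t i) ≤
        (∑ i ∈ Finset.Icc (j + 1) B, q t₀ i) * Real.exp (-μ * (t - t₀))) :=
  stmt11_general B j μ hμ t₀ t₁ q hrange hzero hderiv
end

section
/- Let g : (0, ∞) → ℝ be concave and increasing, and define u(x) = g(1/x) for positive integers x, with the convention 0·u(0) = 0. Then the function F(x₁, …, x_n) = Σ_{i=1}^n x_i u(x_i) defined on nonnegative integer vectors with fixed sum Σ x_i = S is maximized when the coordinates are as balanced as possible, i.e., when every x_i equals either ⌊S/n⌋ or ⌈S/n⌉. -/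
open Finset

private noncomputable def fnat (g : ℝ → ℝ) (m : ℕ) : ℝ :=
  if m = 0 then (0 : ℝ) else (m : ℝ) * g (1 / (m : ℝ))

private lemma key_concave (g : ℝ → ℝ) (hconc : ConcaveOn ℝ (Set.Ioi (0:ℝ)) g)
    (a b : ℝ) (ha : 0 < a) (hb : 0 < b) :
    a * g (1/a) + b * g (1/b) ≤ (a + b) * g (2 / (a + b)) := by
  have hab : 0 < a + b := by linarith
  have h := hconc.2 (Set.mem_Ioi.2 (by positivity : (0:ℝ) < 1/a))
      (Set.mem_Ioi.2 (by positivity : (0:ℝ) < 1/b))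
      (le_of_lt (div_pos ha hab)) (le_of_lt (div_pos hb hab))
      (by field_simp)
  simp only [smul_eq_mul] at h
  have harg : a/(a+b) * (1/a) + b/(a+b) * (1/b) = 2/(a+b) := by field_simp; ring
  rw [harg] at h
  have := mul_le_mul_of_nonneg_left h (le_of_lt hab)
  calc a * g (1/a) + b * g (1/b)
      = (a+b) * (a/(a+b) * g (1/a) + b/(a+b) * g (1/b)) := by field_simp
    _ ≤ (a+b) * g (2/(a+b)) := this

private lemma fnat_succ (g : ℝ → ℝ) (m : ℕ) :
    fnat g (m+1) = ((m:ℝ)+1) * g (1/((m:ℝ)+1)) := by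
  simp only [fnat, Nat.succ_ne_zero, if_false]
  push_cast
  ring_nf

private lemma dstep (g : ℝ → ℝ) (hconc : ConcaveOn ℝ (Set.Ioi (0:ℝ)) g)
    (hmono : MonotoneOn g (Set.Ioi (0:ℝ))) :
    ∀ k : ℕ, (fnat g (k+1+1) - fnat g (k+1)) ≤ (fnat g (k+1) - fnat g k) := by
  intro k
  cases k with
  | zero =>
    have h12 : g (1/2 : ℝ) ≤ g 1 := hmono (by norm_num) (by norm_num) (by norm_num)
    have h0 : fnat g 0 = 0 := by simp [fnat]
    have h1 : fnat g 1 = g 1 := by simp [fnat]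
    have h2 : fnat g 2 = 2 * g (1/2) := by norm_num [fnat]
    rw [show (0:ℕ)+1+1 = 2 by rfl, h0, h1, h2]
    linarith
  | succ k =>
    have hk := key_concave g hconc ((k:ℝ)+1) ((k:ℝ)+3) (by positivity) (by positivity)
    have e1 : fnat g (k+1) = ((k:ℝ)+1) * g (1/((k:ℝ)+1)) := fnat_succ g k
    have e2 : fnat g (k+1+1) = ((k:ℝ)+2) * g (1/((k:ℝ)+2)) := by
      rw [fnat_succ g (k+1)]; push_cast; ring_nf
    have e3 : fnat g (k+1+1+1) = ((k:ℝ)+3) * g (1/((k:ℝ)+3)) := by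
      rw [fnat_succ g (k+2)]; push_cast; ring_nf
    have hab : ((k:ℝ)+1) + ((k:ℝ)+3) = 2*((k:ℝ)+2) := by ring
    rw [hab] at hk
    have harg : (2:ℝ)/(2*((k:ℝ)+2)) = 1/((k:ℝ)+2) := by
      rw [div_eq_div_iff (by positivity) (by positivity)]; ring
    rw [harg] at hk
    rw [e1, e2, e3]
    linarith

private lemma tele (g : ℝ → ℝ) (m : ℕ) :
    fnat g m = ∑ k ∈ range m, (fnat g (k+1) - fnat g k) := by
  rw [Finset.sum_range_sub]
  simp [fnat]

private lemma abel_le (d : ℕ → ℝ) (hd : ∀ k, d (k+1) ≤ d k) (e : ℕ → ℝ)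
    (he : ∀ m, 0 ≤ ∑ k ∈ range m, e k) :
    ∀ N, (∑ k ∈ range N, e k) * d N ≤ ∑ k ∈ range N, e k * d k := by
  intro N
  induction N with
  | zero => simp
  | succ N ih =>
    rw [sum_range_succ, sum_range_succ]
    have hnn : 0 ≤ ∑ k ∈ range N, e k + e N := by
      have := he (N+1); rwa [sum_range_succ] at this
    calc (∑ k ∈ range N, e k + e N) * d (N+1)
        ≤ (∑ k ∈ range N, e k + e N) * d N := mul_le_mul_of_nonneg_left (hd N) hnn
      _ = (∑ k ∈ range N, e k) * d N + e N * d N := by ring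
      _ ≤ (∑ k ∈ range N, e k * d k) + e N * d N := by linarith [ih]

private lemma count_prefix (n m : ℕ) (z : Fin n → ℕ) :
    ∑ k ∈ range m, (univ.filter fun i => k < z i).card = ∑ i, min (z i) m := by
  calc ∑ k ∈ range m, (univ.filter fun i => k < z i).card
      = ∑ k ∈ range m, ∑ i, (if k < z i then 1 else 0) := by
        refine Finset.sum_congr rfl fun k _ => ?_
        rw [Finset.card_filter]
    _ = ∑ i, ∑ k ∈ range m, (if k < z i then 1 else 0) := Finset.sum_comm
    _ = ∑ i, min (z i) m := by
        refine Finset.sum_congr rfl fun i _ => ?_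
        rw [← Finset.card_filter]
        have : (range m).filter (fun k => k < z i) = range (min (z i) m) := by
          ext k; simp only [mem_filter, mem_range]; omega
        rw [this, Finset.card_range]

private lemma sum_f_eq (n S : ℕ) (g : ℝ → ℝ) (z : Fin n → ℕ) (hz : ∀ i, z i ≤ S) :
    ∑ i, fnat g (z i) =
      ∑ k ∈ range S, ((univ.filter fun i => k < z i).card : ℝ) * (fnat g (k+1) - fnat g k) := by
  have h1 : ∀ i : Fin n, fnat g (z i) =
      ∑ k ∈ range S, if k < z i then (fnat g (k+1) - fnat g k) else 0 := by
    intro i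
    rw [← Finset.sum_filter]
    have hzi := hz i
    have hset : (range S).filter (fun k => k < z i) = range (z i) := by
      ext k; simp only [mem_filter, mem_range]; omega
    rw [hset, ← tele]
  simp_rw [h1]
  rw [Finset.sum_comm]
  refine Finset.sum_congr rfl fun k _ => ?_
  rw [Finset.sum_ite, Finset.sum_const_zero, add_zero, Finset.sum_const, nsmul_eq_mul]

private lemma balanced_min (n : ℕ) (hn : 0 < n) (S : ℕ) (y : Fin n → ℕ)
    (hy : ∑ i, y i = S) (hbal : ∀ i, y i = S / n ∨ y i = (S + n - 1) / n) :
    ∀ m, ∑ i, min (y i) m = min S (n * m) := by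
  have hq : ∀ i, S / n ≤ y i := by
    intro i; rcases hbal i with h | h
    · omega
    · rw [h]; exact Nat.div_le_div_right (by omega)
  have hc : ∀ i, y i ≤ S / n + 1 := by
    intro i; rcases hbal i with h | h
    · omega
    · rw [h]
      calc (S+n-1)/n ≤ (S+n)/n := Nat.div_le_div_right (by omega)
        _ = S/n + 1 := Nat.add_div_right S hn
  have hdm : n * (S / n) + S % n = S := Nat.div_add_mod S n
  have hmod : S % n < n := Nat.mod_lt _ hn
  intro m
  rcases le_or_gt m (S / n) with hm | hm
  · have h1 : ∀ i : Fin n, min (y i) m = m := fun i => min_eq_right (le_trans hm (hq i))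
    simp_rw [h1]
    rw [Finset.sum_const, Finset.card_univ, Fintype.card_fin, smul_eq_mul]
    have h2 : n * m ≤ n * (S / n) := Nat.mul_le_mul_left n hm
    omega
  · have h1 : ∀ i : Fin n, min (y i) m = y i := fun i => min_eq_left (le_trans (hc i) hm)
    simp_rw [h1]
    rw [hy]
    have h2 : n * (S/n + 1) ≤ n * m := Nat.mul_le_mul_left n hm
    have h3 : n * (S/n + 1) = n * (S/n) + n := by ring
    omega

/-- The overall utility `Σ xᵢ g(1/xᵢ)` (with the convention `0 · u(0) = 0`), for `g`
concave and increasing, is maximized over nonnegative integer vectors with fixed sum `S`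
by the balanced vectors, whose coordinates all equal `⌊S/n⌋` or `⌈S/n⌉`. -/
theorem stmt12 (n : ℕ) (hn : 0 < n) (S : ℕ) (g : ℝ → ℝ)
    (hconc : ConcaveOn ℝ (Set.Ioi (0 : ℝ)) g)
    (hmono : MonotoneOn g (Set.Ioi (0 : ℝ))) :
    ∀ x : Fin n → ℕ, (∑ i, x i) = S →
    ∀ y : Fin n → ℕ, (∑ i, y i) = S →
      (∀ i, y i = S / n ∨ y i = (S + n - 1) / n) →
      (∑ i, (if x i = 0 then (0 : ℝ) else (x i : ℝ) * g (1 / (x i : ℝ)))) ≤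
        (∑ i, (if y i = 0 then (0 : ℝ) else (y i : ℝ) * g (1 / (y i : ℝ)))) := by
  intro x hx y hy hbal
  have hxle : ∀ i, x i ≤ S := fun i =>
    hx ▸ Finset.single_le_sum (fun i _ => Nat.zero_le (x i)) (mem_univ i)
  have hyle : ∀ i, y i ≤ S := fun i =>
    hy ▸ Finset.single_le_sum (fun i _ => Nat.zero_le (y i)) (mem_univ i)
  -- prefix sum comparisons
  have hminx : ∀ m, (∑ i, min (x i) m) ≤ min S (n * m) := by
    intro m
    refine le_min ?_ ?_
    · calc (∑ i, min (x i) m) ≤ ∑ i, x i := Finset.sum_le_sum fun i _ => min_le_left _ _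
        _ = S := hx
    · calc (∑ i, min (x i) m) ≤ ∑ _i : Fin n, m := Finset.sum_le_sum fun i _ => min_le_right _ _
        _ = n * m := by rw [Finset.sum_const, Finset.card_univ, Fintype.card_fin, smul_eq_mul]
  have hminy : ∀ m, (∑ i, min (y i) m) = min S (n * m) := balanced_min n hn S y hy hbal
  have hpre : ∀ m, (∑ k ∈ range m, (univ.filter fun i => k < x i).card)
      ≤ ∑ k ∈ range m, (univ.filter fun i => k < y i).card := by
    intro m
    rw [count_prefix n m x, count_prefix n m y, hminy m]
    exact hminx m
  have hends : (∑ k ∈ range S, (univ.filter fun i => k < y i).card)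
      = ∑ k ∈ range S, (univ.filter fun i => k < x i).card := by
    rw [count_prefix n S x, count_prefix n S y, hminy S]
    have h1 : ∀ i : Fin n, min (x i) S = x i := fun i => min_eq_left (hxle i)
    simp_rw [h1]
    rw [hx]
    have : S ≤ n * S := Nat.le_mul_of_pos_left S hn
    omega
  -- Abel summation
  have habel := abel_le (fun k => fnat g (k+1) - fnat g k) (dstep g hconc hmono)
      (fun k => ((univ.filter fun i => k < y i).card : ℝ)
        - ((univ.filter fun i => k < x i).card : ℝ))
      (by
        intro m
        rw [Finset.sum_sub_distrib, sub_nonneg, ← Nat.cast_sum, ← Nat.cast_sum, Nat.cast_le]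
        exact hpre m) S
  have hzero : (∑ k ∈ range S, (((univ.filter fun i => k < y i).card : ℝ)
      - ((univ.filter fun i => k < x i).card : ℝ))) = 0 := by
    rw [Finset.sum_sub_distrib, sub_eq_zero, ← Nat.cast_sum, ← Nat.cast_sum, Nat.cast_inj]
    exact hends
  rw [hzero, zero_mul] at habel
  have hmain : (∑ i, fnat g (x i)) ≤ ∑ i, fnat g (y i) := by
    rw [sum_f_eq n S g x hxle, sum_f_eq n S g y hyle]
    have hexp : (∑ k ∈ range S, (((univ.filter fun i => k < y i).card : ℝ)
        - ((univ.filter fun i => k < x i).card : ℝ)) * (fnat g (k+1) - fnat g k))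
        = (∑ k ∈ range S, ((univ.filter fun i => k < y i).card : ℝ) * (fnat g (k+1) - fnat g k))
          - ∑ k ∈ range S, ((univ.filter fun i => k < x i).card : ℝ) * (fnat g (k+1) - fnat g k) := by
      rw [← Finset.sum_sub_distrib]
      exact Finset.sum_congr rfl fun k _ => by ring
    rw [hexp] at habel
    linarith
  simpa only [fnat] using hmain
end
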